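/- Define ε₂(k,λ) = λ e^{-λ/k} + (λ − k)(1 − e^{-λ/k}) for real k, λ > 0. Then for every fixed λ > 0, the function k ↦ ε₂(k,λ) is strictly decreasing on (0, ∞). -/

import Mathlib

/-!
Writing `t = λ / k`, one has `ε₂(k, λ) = λ - k + k e^{-t}`, whose derivative in `k` is
`e^{-t} (1 + t) - 1`. This is negative because `1 + t < e^t` for `t ≠ 0`.
-/

/-- `ε₂(k,λ) = λ e^{-λ/k} + (λ − k)(1 − e^{-λ/k})`. -/
noncomputable def eps2 (k lam : ℝ) : ℝ :=
  lam * Real.exp (-(lam / k)) + (lam - k) * (1 - Real.exp (-(lam / k)))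

open Real

lemma eps2_eq (k lam : ℝ) : eps2 k lam = lam - k + k * exp (-(lam / k)) := by
  unfold eps2
  ring

lemma hasDerivAt_eps2 (lam : ℝ) {x : ℝ} (hx : x ≠ 0) :
    HasDerivAt (fun k => eps2 k lam) (exp (-(lam / x)) * (1 + lam / x) - 1) x := by
  have hdiv : HasDerivAt (fun k => lam / k) (-(lam / x ^ 2)) x := by
    simpa [div_eq_mul_inv, neg_div] using (hasDerivAt_inv hx).const_mul lam
  have hprod : HasDerivAt (fun k => k * exp (-(lam / k)))
      (1 * exp (-(lam / x)) + x * (exp (-(lam / x)) * -(-(lam / x ^ 2)))) x :=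
    (hasDerivAt_id' x).mul hdiv.neg.exp
  simp_rw [eps2_eq]
  refine (((hasDerivAt_id' x).const_sub lam).add hprod).congr_deriv ?_
  field_simp
  ring

lemma exp_neg_mul_one_add_lt_one {t : ℝ} (ht : t ≠ 0) : exp (-t) * (1 + t) < 1 := by
  calc exp (-t) * (1 + t) < exp (-t) * exp t := by
        gcongr
        linarith [add_one_lt_exp ht]
    _ = 1 := by rw [← exp_add, neg_add_cancel, exp_zero]

/-- For every fixed `λ > 0`, the function `k ↦ ε₂(k,λ)` is strictly decreasing
    on `(0, ∞)`. -/
theorem stmt_6 (lam : ℝ) (hlam : 0 < lam) :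
    StrictAntiOn (fun k => eps2 k lam) (Set.Ioi (0 : ℝ)) := by
  have hderiv (x : ℝ) (hx : x ∈ Set.Ioi 0) := hasDerivAt_eps2 lam (ne_of_gt hx)
  refine strictAntiOn_of_hasDerivWithinAt_neg (convex_Ioi 0)
    (fun x hx => (hderiv x hx).continuousAt.continuousWithinAt)
    (fun x hx => (hderiv x (interior_subset hx)).hasDerivWithinAt) (fun x hx => ?_)
  rw [interior_Ioi] at hx
  exact sub_neg.2 (exp_neg_mul_one_add_lt_one (div_pos hlam hx).ne')
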